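/- arXiv:2212.09120 — 2 statements merged into one kernel-verified Lean document; each statement's English description precedes it below -/
import Mathlib

section
/- On a 2-sphere with round metric q and area 2-form ε (raised inverse ε^{AB}), define the Poisson bracket {f,g} = ε^{AB}∇_A f ∇_B g and the symmetric bracket ⟨f,g⟩ = q^{AB}∇_A f ∇_B g. Then for smooth functions φ, ψ, λ: {φ,⟨ψ,λ⟩} − ⟨ψ,{φ,λ}⟩ = −{⟨φ,ψ⟩,λ} + {φ,λ}∇²ψ, where ∇² is the Laplace-Beltrami operator. -/
noncomputable section

/-- Partial derivative of a function on `ℝ²` in the `i`-th coordinate direction. -/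
def pd (i : Fin 2) (f : (Fin 2 → ℝ) → ℝ) : (Fin 2 → ℝ) → ℝ :=
  fun x => fderiv ℝ f x (Pi.single i 1)

/-- The conformal factor of the round unit sphere in stereographic coordinates:
the round metric is `q_{AB} = P⁻² δ_{AB}` with `P = (1 + x² + y²)/2`. -/
def Pconf : (Fin 2 → ℝ) → ℝ := fun x => (1 + x 0 ^ 2 + x 1 ^ 2) / 2

/-- The Poisson bracket `{f,g} = ε^{AB} ∇_A f ∇_B g` of the round sphere,
in stereographic coordinates (`ε^{AB} = P² ε̂^{AB}`). -/
def pb (f g : (Fin 2 → ℝ) → ℝ) : (Fin 2 → ℝ) → ℝ :=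
  fun x => (Pconf x) ^ 2 * (pd 0 f x * pd 1 g x - pd 1 f x * pd 0 g x)

/-- The symmetric bracket `⟨f,g⟩ = q^{AB} ∇_A f ∇_B g` of the round sphere,
in stereographic coordinates (`q^{AB} = P² δ^{AB}`). -/
def sb (f g : (Fin 2 → ℝ) → ℝ) : (Fin 2 → ℝ) → ℝ :=
  fun x => (Pconf x) ^ 2 * (pd 0 f x * pd 0 g x + pd 1 f x * pd 1 g x)

/-- The Laplace–Beltrami operator `∇²` of the round sphere in stereographic
coordinates: `∇² f = P² Δ_flat f`. -/
def lap (f : (Fin 2 → ℝ) → ℝ) : (Fin 2 → ℝ) → ℝ :=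
  fun x => (Pconf x) ^ 2 * (pd 0 (pd 0 f) x + pd 1 (pd 1 f) x)

namespace SphereBracketAux

lemma pd_smooth {f : (Fin 2 → ℝ) → ℝ} (hf : ContDiff ℝ (⊤ : ℕ∞) f) (i : Fin 2) :
    ContDiff ℝ (⊤ : ℕ∞) (pd i f) := by
  have : pd i f = fun x => (ContinuousLinearMap.apply ℝ ℝ (Pi.single i 1 : Fin 2 → ℝ))
      (fderiv ℝ f x) := rfl
  rw [this]
  exact (ContinuousLinearMap.apply ℝ ℝ _).contDiff.comp (hf.fderiv_right (m := ((⊤ : ℕ∞) : WithTop ℕ∞)) (by exact_mod_cast (le_top : (⊤ : ℕ∞) + 1 ≤ ⊤)))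

lemma pconf_smooth : ContDiff ℝ (⊤ : ℕ∞) Pconf := by
  have : Pconf = fun x : Fin 2 → ℝ => (1 + x 0 ^ 2 + x 1 ^ 2) * (1 / 2) := by
    funext x; unfold Pconf; ring
  rw [this]
  fun_prop

lemma pd_add {f g : (Fin 2 → ℝ) → ℝ} {x : Fin 2 → ℝ} (hf : DifferentiableAt ℝ f x)
    (hg : DifferentiableAt ℝ g x) (i : Fin 2) :
    pd i (fun y => f y + g y) x = pd i f x + pd i g x := by
  unfold pd
  rw [show (fun y => f y + g y) = f + g from rfl, fderiv_add hf hg]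
  simp

lemma pd_mul {f g : (Fin 2 → ℝ) → ℝ} {x : Fin 2 → ℝ} (hf : DifferentiableAt ℝ f x)
    (hg : DifferentiableAt ℝ g x) (i : Fin 2) :
    pd i (fun y => f y * g y) x = pd i f x * g x + f x * pd i g x := by
  unfold pd
  rw [show (fun y => f y * g y) = f * g from rfl, fderiv_mul hf hg]
  simp
  try ring

lemma pd_sq {f : (Fin 2 → ℝ) → ℝ} {x : Fin 2 → ℝ} (hf : DifferentiableAt ℝ f x) (i : Fin 2) :
    pd i (fun y => f y ^ 2) x = 2 * f x * pd i f x := by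
  have : (fun y => f y ^ 2) = fun y => f y * f y := by
    funext y; ring
  rw [this, pd_mul hf hf]
  ring

lemma pd_comm {f : (Fin 2 → ℝ) → ℝ} (hf : ContDiff ℝ (⊤ : ℕ∞) f) (i j : Fin 2) (x : Fin 2 → ℝ) :
    pd i (pd j f) x = pd j (pd i f) x := by
  have hsymm : IsSymmSndFDerivAt ℝ f x :=
    hf.contDiffAt.isSymmSndFDerivAt (by rw [minSmoothness_of_isRCLikeNormedField]; exact WithTop.coe_le_coe.mpr le_top)
  have hd : DifferentiableAt ℝ (fderiv ℝ f) x :=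
    ((hf.fderiv_right (m := 1) ((WithTop.coe_le_coe.mpr le_top))).differentiable one_ne_zero).differentiableAt
  have key : ∀ a b : Fin 2, pd a (pd b f) x
      = fderiv ℝ (fderiv ℝ f) x (Pi.single a 1) (Pi.single b 1) := by
    intro a b
    have e2 := fderiv_clm_apply (𝕜 := ℝ) (c := fderiv ℝ f)
      (u := fun _ : Fin 2 → ℝ => (Pi.single b 1 : Fin 2 → ℝ)) (x := x) hd (differentiableAt_const _)
    calc pd a (pd b f) x
        = fderiv ℝ (fun y => (fderiv ℝ f y) ((fun _ : Fin 2 → ℝ => (Pi.single b 1 : Fin 2 → ℝ)) y)) x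
            (Pi.single a 1) := rfl
      _ = _ := by rw [e2]; simp
  rw [key i j, key j i, hsymm.eq]

/-- Expansion of a partial derivative of `sb f g`. -/
lemma pd_sb {f g : (Fin 2 → ℝ) → ℝ} (hf : ContDiff ℝ (⊤ : ℕ∞) f) (hg : ContDiff ℝ (⊤ : ℕ∞) g)
    (i : Fin 2) (x : Fin 2 → ℝ) :
    pd i (sb f g) x = 2 * Pconf x * pd i Pconf x * (pd 0 f x * pd 0 g x + pd 1 f x * pd 1 g x)
      + Pconf x ^ 2 * ((pd i (pd 0 f) x * pd 0 g x + pd 0 f x * pd i (pd 0 g) x)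
        + (pd i (pd 1 f) x * pd 1 g x + pd 1 f x * pd i (pd 1 g) x)) := by
  have dP : DifferentiableAt ℝ (fun y => Pconf y ^ 2) x := by
    exact ((pconf_smooth.differentiable (by simp)).differentiableAt).pow 2
  have df : ∀ (a : Fin 2) (h : ContDiff ℝ (⊤ : ℕ∞) f), DifferentiableAt ℝ (pd a f) x := fun a h =>
    ((pd_smooth h a).differentiable (by simp)).differentiableAt
  have d0f := ((pd_smooth hf 0).differentiable (by simp)).differentiableAt (x := x)
  have d1f := ((pd_smooth hf 1).differentiable (by simp)).differentiableAt (x := x)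
  have d0g := ((pd_smooth hg 0).differentiable (by simp)).differentiableAt (x := x)
  have d1g := ((pd_smooth hg 1).differentiable (by simp)).differentiableAt (x := x)
  have hsum : DifferentiableAt ℝ (fun y => pd 0 f y * pd 0 g y + pd 1 f y * pd 1 g y) x :=
    (d0f.mul d0g).add (d1f.mul d1g)
  have : sb f g = fun y => (fun z => Pconf z ^ 2) y *
      (fun z => pd 0 f z * pd 0 g z + pd 1 f z * pd 1 g z) y := rfl
  rw [this, pd_mul dP hsum, pd_sq ((pconf_smooth.differentiable (by simp)).differentiableAt),
    pd_add (f := fun y => pd 0 f y * pd 0 g y) (g := fun y => pd 1 f y * pd 1 g y)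
      (d0f.mul d0g) (d1f.mul d1g), pd_mul d0f d0g, pd_mul d1f d1g]
  try ring

/-- Expansion of a partial derivative of `pb f g`. -/
lemma pd_pb {f g : (Fin 2 → ℝ) → ℝ} (hf : ContDiff ℝ (⊤ : ℕ∞) f) (hg : ContDiff ℝ (⊤ : ℕ∞) g)
    (i : Fin 2) (x : Fin 2 → ℝ) :
    pd i (pb f g) x = 2 * Pconf x * pd i Pconf x * (pd 0 f x * pd 1 g x - pd 1 f x * pd 0 g x)
      + Pconf x ^ 2 * ((pd i (pd 0 f) x * pd 1 g x + pd 0 f x * pd i (pd 1 g) x)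
        - (pd i (pd 1 f) x * pd 0 g x + pd 1 f x * pd i (pd 0 g) x)) := by
  have dP : DifferentiableAt ℝ (fun y => Pconf y ^ 2) x :=
    ((pconf_smooth.differentiable (by simp)).differentiableAt).pow 2
  have d0f := ((pd_smooth hf 0).differentiable (by simp)).differentiableAt (x := x)
  have d1f := ((pd_smooth hf 1).differentiable (by simp)).differentiableAt (x := x)
  have d0g := ((pd_smooth hg 0).differentiable (by simp)).differentiableAt (x := x)
  have d1g := ((pd_smooth hg 1).differentiable (by simp)).differentiableAt (x := x)
  have hsum : DifferentiableAt ℝ (fun y => pd 0 f y * pd 1 g y + -(pd 1 f y * pd 0 g y)) x :=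
    (d0f.mul d1g).add (d1f.mul d0g).neg
  have : pb f g = fun y => (fun z => Pconf z ^ 2) y *
      (fun z => pd 0 f z * pd 1 g z + -(pd 1 f z * pd 0 g z)) y := by
    funext y; unfold pb; ring
  rw [this, pd_mul dP hsum, pd_sq ((pconf_smooth.differentiable (by simp)).differentiableAt),
    pd_add (f := fun y => pd 0 f y * pd 1 g y) (g := fun y => -(pd 1 f y * pd 0 g y))
      (d0f.mul d1g) ((d1f.mul d0g).neg)]
  have hneg : pd i (fun y => -(pd 1 f y * pd 0 g y)) x = -(pd i (fun y => pd 1 f y * pd 0 g y) x) := by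
    unfold pd
    rw [show (fun y => -((fderiv ℝ f y) (Pi.single 1 1 : Fin 2 → ℝ) * (fderiv ℝ g y) (Pi.single 0 1 : Fin 2 → ℝ)))
        = -(fun y => (fderiv ℝ f y) (Pi.single 1 1 : Fin 2 → ℝ) * (fderiv ℝ g y) (Pi.single 0 1 : Fin 2 → ℝ)) from rfl,
      fderiv_neg]
    simp
  rw [hneg, pd_mul d0f d1g, pd_mul d1f d0g]
  ring

end SphereBracketAux

open SphereBracketAux in
/-- On the round 2-sphere, for smooth functions `φ, ψ, λ`:
`{φ,⟨ψ,λ⟩} − ⟨ψ,{φ,λ}⟩ = −{⟨φ,ψ⟩,λ} + {φ,λ} ∇²ψ`. -/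
theorem sphere_bracket_identity (φ ψ lam : (Fin 2 → ℝ) → ℝ)
    (hφ : ContDiff ℝ (⊤ : ℕ∞) φ) (hψ : ContDiff ℝ (⊤ : ℕ∞) ψ) (hlam : ContDiff ℝ (⊤ : ℕ∞) lam)
    (x : Fin 2 → ℝ) :
    pb φ (sb ψ lam) x - sb ψ (pb φ lam) x = -(pb (sb φ ψ) lam x) + pb φ lam x * lap ψ x := by
  show Pconf x ^ 2 * (pd 0 φ x * pd 1 (sb ψ lam) x - pd 1 φ x * pd 0 (sb ψ lam) x)
      - Pconf x ^ 2 * (pd 0 ψ x * pd 0 (pb φ lam) x + pd 1 ψ x * pd 1 (pb φ lam) x)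
    = -(Pconf x ^ 2 * (pd 0 (sb φ ψ) x * pd 1 lam x - pd 1 (sb φ ψ) x * pd 0 lam x))
      + Pconf x ^ 2 * (pd 0 φ x * pd 1 lam x - pd 1 φ x * pd 0 lam x)
        * (Pconf x ^ 2 * (pd 0 (pd 0 ψ) x + pd 1 (pd 1 ψ) x))
  rw [pd_sb hψ hlam 0 x, pd_sb hψ hlam 1 x, pd_sb hφ hψ 0 x, pd_sb hφ hψ 1 x,
    pd_pb hφ hlam 0 x, pd_pb hφ hlam 1 x,
    pd_comm hφ 1 0 x, pd_comm hψ 1 0 x, pd_comm hlam 1 0 x]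
  ring

end
end

section
/- Let C_{αβ}{}^γ, E_{αβ}{}^γ, F_{αβ}{}^γ, D_{αβ}{}^γ be structure constants (C antisymmetric in αβ, E and F symmetric in αβ) satisfying the Jacobi identity C_{αδ}{}^σ C_{βγ}{}^δ + cycl[α,β,γ] = 0 and the cocycle identity C_{αδ}{}^σ D_{βγ}{}^δ + D_{αδ}{}^σ C_{βγ}{}^δ + cycl[α,β,γ] = 0. Define on generators (J_α, N_α) the bilinear antisymmetric map D by D(J_α,J_β) = D_{αβ}{}^γ J_γ, D(J_α,N_β) = D_{αβ}{}^γ N_γ, D(N_α,N_β) = −C_{αβ}{}^γ J_γ, and the Lie bracket by {J_α,J_β} = C_{αβ}{}^γ J_γ, {J_α,N_β} = C_{αβ}{}^γ N_γ, {N_α,N_β} = 0. Then D is a Lie algebra 2-cocycle: δD(P₀,P₁,P₂) = 0 for all generators P_i, where δD(P₀,P₁,P₂) = {P₀,D(P₁,P₂)} − {P₁,D(P₀,P₂)} + {P₂,D(P₀,P₁)} − D({P₀,P₁},P₂) + D({P₀,P₂},P₁) − D({P₁,P₂},P₀). -/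
section AuxDeformation

variable {L : Type*} [AddCommGroup L] [Module ℝ L] {ι : Type*} [Fintype ι]

lemma aux_expand (Φ : L →ₗ[ℝ] L) (c : ι → ℝ) (V W : ι → L) (d : ι → ι → ℝ)
    (h : ∀ δ, Φ (V δ) = ∑ σ, d δ σ • W σ) :
    Φ (∑ δ, c δ • V δ) = ∑ σ, (∑ δ, c δ * d δ σ) • W σ := by
  rw [map_sum]
  simp only [map_smul, h, Finset.smul_sum, smul_smul]
  rw [Finset.sum_comm]
  exact Finset.sum_congr rfl fun σ _ => (Finset.sum_smul).symm

lemma aux_combo (a b c d e f : ι → ℝ) (V : ι → L)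
    (h : ∀ σ, a σ - b σ + c σ - d σ + e σ - f σ = 0) :
    (∑ σ, a σ • V σ) - (∑ σ, b σ • V σ) + (∑ σ, c σ • V σ) - (∑ σ, d σ • V σ) +
      (∑ σ, e σ • V σ) - (∑ σ, f σ • V σ) = 0 := by
  rw [← Finset.sum_sub_distrib, ← Finset.sum_add_distrib, ← Finset.sum_sub_distrib,
    ← Finset.sum_add_distrib, ← Finset.sum_sub_distrib]
  refine Finset.sum_eq_zero fun σ _ => ?_
  rw [← sub_smul, ← add_smul, ← sub_smul, ← add_smul, ← sub_smul, h σ, zero_smul]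

end AuxDeformation

/-- Let `C_{αβ}{}^γ` and `D_{αβ}{}^γ` be antisymmetric structure constants satisfying the
Jacobi identity and the (contracted) cocycle identity, and let `{·,·}` (here `Br`) and `D`
(here `Dm`) be the bilinear antisymmetric maps defined on the generators `(J_α, N_α)` by
`{J_α,J_β} = C_{αβ}{}^γ J_γ`, `{J_α,N_β} = C_{αβ}{}^γ N_γ`, `{N_α,N_β} = 0` and
`D(J_α,J_β) = D_{αβ}{}^γ J_γ`, `D(J_α,N_β) = D_{αβ}{}^γ N_γ`,
`D(N_α,N_β) = −C_{αβ}{}^γ J_γ`. Then `D` is a Lie algebra 2-cocycle: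
`δD(P₀,P₁,P₂) = 0` for all generators `P_i`. -/
theorem deformation_cocycle {L : Type*} [AddCommGroup L] [Module ℝ L]
    {ι : Type*} [Fintype ι]
    (J N : ι → L) (C D : ι → ι → ι → ℝ)
    (Br Dm : L →ₗ[ℝ] L →ₗ[ℝ] L)
    (hCanti : ∀ α β γ, C β α γ = -C α β γ)
    (hDanti : ∀ α β γ, D β α γ = -D α β γ)
    (hJacobi : ∀ α β γ σ,
      ∑ δ, (C α δ σ * C β γ δ + C β δ σ * C γ α δ + C γ δ σ * C α β δ) = 0)
    (hCocycle : ∀ α β γ σ,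
      ∑ δ, (C α δ σ * D β γ δ + D α δ σ * C β γ δ + C β δ σ * D γ α δ +
        D β δ σ * C γ α δ + C γ δ σ * D α β δ + D γ δ σ * C α β δ) = 0)
    (hBranti : ∀ x y, Br x y = -Br y x)
    (hDmanti : ∀ x y, Dm x y = -Dm y x)
    (hBrJJ : ∀ α β, Br (J α) (J β) = ∑ γ, C α β γ • J γ)
    (hBrJN : ∀ α β, Br (J α) (N β) = ∑ γ, C α β γ • N γ)
    (hBrNN : ∀ α β, Br (N α) (N β) = 0)
    (hDmJJ : ∀ α β, Dm (J α) (J β) = ∑ γ, D α β γ • J γ)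
    (hDmJN : ∀ α β, Dm (J α) (N β) = ∑ γ, D α β γ • N γ)
    (hDmNN : ∀ α β, Dm (N α) (N β) = -∑ γ, C α β γ • J γ) :
    ∀ P₀ P₁ P₂ : L,
      ((∃ α, P₀ = J α) ∨ (∃ α, P₀ = N α)) →
      ((∃ α, P₁ = J α) ∨ (∃ α, P₁ = N α)) →
      ((∃ α, P₂ = J α) ∨ (∃ α, P₂ = N α)) →
      Br P₀ (Dm P₁ P₂) - Br P₁ (Dm P₀ P₂) + Br P₂ (Dm P₀ P₁) -
          Dm (Br P₀ P₁) P₂ + Dm (Br P₀ P₂) P₁ - Dm (Br P₁ P₂) P₀ = 0 := by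
  -- derived generator relations
  have hBrNJ : ∀ a b, Br (N a) (J b) = ∑ γ, (-C b a γ) • N γ := by
    intro a b
    rw [hBranti, hBrJN, ← Finset.sum_neg_distrib]
    exact Finset.sum_congr rfl fun γ _ => (neg_smul _ _).symm
  have hDmNJ : ∀ a b, Dm (N a) (J b) = ∑ γ, (-D b a γ) • N γ := by
    intro a b
    rw [hDmanti, hDmJN, ← Finset.sum_neg_distrib]
    exact Finset.sum_congr rfl fun γ _ => (neg_smul _ _).symm
  have hDmNN' : ∀ a b, Dm (N a) (N b) = ∑ γ, (-C a b γ) • J γ := by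
    intro a b
    rw [hDmNN, ← Finset.sum_neg_distrib]
    exact Finset.sum_congr rfl fun γ _ => (neg_smul _ _).symm
  -- antisymmetry of the coboundary expression under swapping the first two arguments
  have swap01 : ∀ x y z : L,
      Br x (Dm y z) - Br y (Dm x z) + Br z (Dm x y) -
        Dm (Br x y) z + Dm (Br x z) y - Dm (Br y z) x =
      -(Br y (Dm x z) - Br x (Dm y z) + Br z (Dm y x) -
        Dm (Br y x) z + Dm (Br y z) x - Dm (Br x z) y) := by
    intro x y z
    simp only [hDmanti y x, hBranti y x, map_neg, LinearMap.neg_apply]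
    abel
  -- antisymmetry under swapping the last two arguments
  have swap12 : ∀ x y z : L,
      Br x (Dm y z) - Br y (Dm x z) + Br z (Dm x y) -
        Dm (Br x y) z + Dm (Br x z) y - Dm (Br y z) x =
      -(Br x (Dm z y) - Br z (Dm x y) + Br y (Dm x z) -
        Dm (Br x z) y + Dm (Br x y) z - Dm (Br z y) x) := by
    intro x y z
    simp only [hDmanti z y, hBranti z y, map_neg, LinearMap.neg_apply]
    abel
  -- Core case JJJ
  have coreJJJ : ∀ α β γ,
      Br (J α) (Dm (J β) (J γ)) - Br (J β) (Dm (J α) (J γ)) + Br (J γ) (Dm (J α) (J β)) -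
        Dm (Br (J α) (J β)) (J γ) + Dm (Br (J α) (J γ)) (J β) -
        Dm (Br (J β) (J γ)) (J α) = 0 := by
    intro α β γ
    have t1 : Br (J α) (Dm (J β) (J γ)) = ∑ σ, (∑ δ, D β γ δ * C α δ σ) • J σ := by
      rw [hDmJJ]; exact aux_expand _ _ _ _ _ (fun δ => hBrJJ α δ)
    have t2 : Br (J β) (Dm (J α) (J γ)) = ∑ σ, (∑ δ, D α γ δ * C β δ σ) • J σ := by
      rw [hDmJJ]; exact aux_expand _ _ _ _ _ (fun δ => hBrJJ β δ)
    have t3 : Br (J γ) (Dm (J α) (J β)) = ∑ σ, (∑ δ, D α β δ * C γ δ σ) • J σ := by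
      rw [hDmJJ]; exact aux_expand _ _ _ _ _ (fun δ => hBrJJ γ δ)
    have t4 : Dm (Br (J α) (J β)) (J γ) = ∑ σ, (∑ δ, C α β δ * D δ γ σ) • J σ := by
      rw [hBrJJ]
      exact aux_expand (Dm.flip (J γ)) _ _ _ _
        (fun δ => by rw [LinearMap.flip_apply, hDmJJ])
    have t5 : Dm (Br (J α) (J γ)) (J β) = ∑ σ, (∑ δ, C α γ δ * D δ β σ) • J σ := by
      rw [hBrJJ]
      exact aux_expand (Dm.flip (J β)) _ _ _ _
        (fun δ => by rw [LinearMap.flip_apply, hDmJJ])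
    have t6 : Dm (Br (J β) (J γ)) (J α) = ∑ σ, (∑ δ, C β γ δ * D δ α σ) • J σ := by
      rw [hBrJJ]
      exact aux_expand (Dm.flip (J α)) _ _ _ _
        (fun δ => by rw [LinearMap.flip_apply, hDmJJ])
    rw [t1, t2, t3, t4, t5, t6]
    refine aux_combo _ _ _ _ _ _ _ fun σ => ?_
    have h := hCocycle α β γ σ
    simp only [← Finset.sum_sub_distrib, ← Finset.sum_add_distrib]
    rw [← h]
    refine Finset.sum_congr rfl fun δ _ => ?_
    simp only [hDanti γ δ σ, hDanti β δ σ, hDanti α δ σ, hDanti α γ δ, hCanti α γ δ]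
    ring
  -- Core case JJN
  have coreJJN : ∀ α β γ,
      Br (J α) (Dm (J β) (N γ)) - Br (J β) (Dm (J α) (N γ)) + Br (N γ) (Dm (J α) (J β)) -
        Dm (Br (J α) (J β)) (N γ) + Dm (Br (J α) (N γ)) (J β) -
        Dm (Br (J β) (N γ)) (J α) = 0 := by
    intro α β γ
    have t1 : Br (J α) (Dm (J β) (N γ)) = ∑ σ, (∑ δ, D β γ δ * C α δ σ) • N σ := by
      rw [hDmJN]; exact aux_expand _ _ _ _ _ (fun δ => hBrJN α δ)
    have t2 : Br (J β) (Dm (J α) (N γ)) = ∑ σ, (∑ δ, D α γ δ * C β δ σ) • N σ := by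
      rw [hDmJN]; exact aux_expand _ _ _ _ _ (fun δ => hBrJN β δ)
    have t3 : Br (N γ) (Dm (J α) (J β)) = ∑ σ, (∑ δ, D α β δ * (-C δ γ σ)) • N σ := by
      rw [hDmJJ]; exact aux_expand _ _ _ _ _ (fun δ => hBrNJ γ δ)
    have t4 : Dm (Br (J α) (J β)) (N γ) = ∑ σ, (∑ δ, C α β δ * D δ γ σ) • N σ := by
      rw [hBrJJ]
      exact aux_expand (Dm.flip (N γ)) _ _ _ _
        (fun δ => by rw [LinearMap.flip_apply, hDmJN])
    have t5 : Dm (Br (J α) (N γ)) (J β) = ∑ σ, (∑ δ, C α γ δ * (-D β δ σ)) • N σ := by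
      rw [hBrJN]
      exact aux_expand (Dm.flip (J β)) _ _ _ _
        (fun δ => by rw [LinearMap.flip_apply, hDmNJ])
    have t6 : Dm (Br (J β) (N γ)) (J α) = ∑ σ, (∑ δ, C β γ δ * (-D α δ σ)) • N σ := by
      rw [hBrJN]
      exact aux_expand (Dm.flip (J α)) _ _ _ _
        (fun δ => by rw [LinearMap.flip_apply, hDmNJ])
    rw [t1, t2, t3, t4, t5, t6]
    refine aux_combo _ _ _ _ _ _ _ fun σ => ?_
    have h := hCocycle α β γ σ
    simp only [← Finset.sum_sub_distrib, ← Finset.sum_add_distrib]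
    rw [← h]
    refine Finset.sum_congr rfl fun δ _ => ?_
    simp only [hCanti γ δ σ, hDanti γ δ σ, hDanti α γ δ, hCanti α γ δ]
    ring
  -- Core case JNN
  have coreJNN : ∀ α β γ,
      Br (J α) (Dm (N β) (N γ)) - Br (N β) (Dm (J α) (N γ)) + Br (N γ) (Dm (J α) (N β)) -
        Dm (Br (J α) (N β)) (N γ) + Dm (Br (J α) (N γ)) (N β) -
        Dm (Br (N β) (N γ)) (J α) = 0 := by
    intro α β γ
    have t1 : Br (J α) (Dm (N β) (N γ)) = ∑ σ, (∑ δ, (-C β γ δ) * C α δ σ) • J σ := by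
      rw [hDmNN']; exact aux_expand _ _ _ _ _ (fun δ => hBrJJ α δ)
    have t2 : Br (N β) (Dm (J α) (N γ)) = ∑ σ, (0 : ℝ) • J σ := by
      rw [hDmJN, map_sum]
      simp [hBrNN]
    have t3 : Br (N γ) (Dm (J α) (N β)) = ∑ σ, (0 : ℝ) • J σ := by
      rw [hDmJN, map_sum]
      simp [hBrNN]
    have t4 : Dm (Br (J α) (N β)) (N γ) = ∑ σ, (∑ δ, C α β δ * (-C δ γ σ)) • J σ := by
      rw [hBrJN]
      exact aux_expand (Dm.flip (N γ)) _ _ _ _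
        (fun δ => by rw [LinearMap.flip_apply, hDmNN'])
    have t5 : Dm (Br (J α) (N γ)) (N β) = ∑ σ, (∑ δ, C α γ δ * (-C δ β σ)) • J σ := by
      rw [hBrJN]
      exact aux_expand (Dm.flip (N β)) _ _ _ _
        (fun δ => by rw [LinearMap.flip_apply, hDmNN'])
    have t6 : Dm (Br (N β) (N γ)) (J α) = ∑ σ, (0 : ℝ) • J σ := by
      simp [hBrNN]
    rw [t1, t2, t3, t4, t5, t6]
    refine aux_combo _ _ _ _ _ _ _ fun σ => ?_
    have h := hJacobi α β γ σ
    simp only [sub_zero, add_zero]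
    simp only [← Finset.sum_sub_distrib, ← Finset.sum_add_distrib]
    rw [show (0 : ℝ) = -∑ δ, (C α δ σ * C β γ δ + C β δ σ * C γ α δ + C γ δ σ * C α β δ) by
      rw [h, neg_zero], ← Finset.sum_neg_distrib]
    refine Finset.sum_congr rfl fun δ _ => ?_
    simp only [hCanti γ δ σ, hCanti β δ σ, hCanti α γ δ]
    ring
  -- Core case NNN
  have coreNNN : ∀ α β γ,
      Br (N α) (Dm (N β) (N γ)) - Br (N β) (Dm (N α) (N γ)) + Br (N γ) (Dm (N α) (N β)) -
        Dm (Br (N α) (N β)) (N γ) + Dm (Br (N α) (N γ)) (N β) -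
        Dm (Br (N β) (N γ)) (N α) = 0 := by
    intro α β γ
    have t1 : Br (N α) (Dm (N β) (N γ)) = ∑ σ, (∑ δ, (-C β γ δ) * (-C δ α σ)) • N σ := by
      rw [hDmNN']; exact aux_expand _ _ _ _ _ (fun δ => hBrNJ α δ)
    have t2 : Br (N β) (Dm (N α) (N γ)) = ∑ σ, (∑ δ, (-C α γ δ) * (-C δ β σ)) • N σ := by
      rw [hDmNN']; exact aux_expand _ _ _ _ _ (fun δ => hBrNJ β δ)
    have t3 : Br (N γ) (Dm (N α) (N β)) = ∑ σ, (∑ δ, (-C α β δ) * (-C δ γ σ)) • N σ := by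
      rw [hDmNN']; exact aux_expand _ _ _ _ _ (fun δ => hBrNJ γ δ)
    have t4 : Dm (Br (N α) (N β)) (N γ) = ∑ σ, (0 : ℝ) • N σ := by
      simp [hBrNN]
    have t5 : Dm (Br (N α) (N γ)) (N β) = ∑ σ, (0 : ℝ) • N σ := by
      simp [hBrNN]
    have t6 : Dm (Br (N β) (N γ)) (N α) = ∑ σ, (0 : ℝ) • N σ := by
      simp [hBrNN]
    rw [t1, t2, t3, t4, t5, t6]
    refine aux_combo _ _ _ _ _ _ _ fun σ => ?_
    have h := hJacobi α β γ σ
    simp only [sub_zero, add_zero]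
    simp only [← Finset.sum_sub_distrib, ← Finset.sum_add_distrib]
    rw [show (0 : ℝ) = -∑ δ, (C α δ σ * C β γ δ + C β δ σ * C γ α δ + C γ δ σ * C α β δ) by
      rw [h, neg_zero], ← Finset.sum_neg_distrib]
    refine Finset.sum_congr rfl fun δ _ => ?_
    simp only [hCanti α δ σ, hCanti β δ σ, hCanti γ δ σ, hCanti α γ δ]
    ring
  rintro P₀ P₁ P₂ (⟨α, rfl⟩ | ⟨α, rfl⟩) (⟨β, rfl⟩ | ⟨β, rfl⟩) (⟨γ, rfl⟩ | ⟨γ, rfl⟩)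
  · exact coreJJJ α β γ
  · exact coreJJN α β γ
  · rw [swap12, neg_eq_zero]
    exact coreJJN α γ β
  · exact coreJNN α β γ
  · rw [swap01, neg_eq_zero, swap12, neg_eq_zero]
    exact coreJJN β γ α
  · rw [swap01, neg_eq_zero]
    exact coreJNN β α γ
  · rw [swap12, neg_eq_zero, swap01, neg_eq_zero]
    exact coreJNN γ α β
  · exact coreNNN α β γ
end
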